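/- arXiv:2409.18894 — 2 statements merged into one kernel-verified Lean document; each statement's English description precedes it below -/
import Mathlib

section
/- Let h₁, h₂, κ : [0,∞) → ℝ be non-decreasing, right-continuous, unbounded functions with value 0 at 0 and strictly positive on (0,∞), such that both (h₁, κ) and (h₂, κ) satisfy the compatibility conditions (H1) and (H2). Then (h₁ + h₂, κ) also satisfies (H1) and (H2), and (h₁ ∘̃ κ) + (h₂ ∘̃ κ) = (h₁ + h₂) ∘̃ κ. -/
open Set Function Filter
open scoped Topology

/-- Right-continuous generalized inverse: `h⁻¹(s) = inf {u > 0 : h(u) > s}`. -/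
noncomputable def ginv (h : ℝ → ℝ) (s : ℝ) : ℝ := sInf {u : ℝ | 0 < u ∧ s < h u}

/-- Left limit of a function monotone on `[0,∞)`, with the convention `h(0−) = h(0)`. -/
noncomputable def llim (h : ℝ → ℝ) (u : ℝ) : ℝ :=
  if u ≤ 0 then h 0 else sSup (h '' Set.Ico 0 u)

/-- Right-continuity on `[0,∞)`. -/
def RightCts (h : ℝ → ℝ) : Prop := ∀ x : ℝ, 0 ≤ x → ContinuousWithinAt h (Set.Ici x) x

/-- The class `D₀↑↑(ℝ₊)`: non-decreasing, right-continuous, `h 0 = 0`, strictly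
positive on `(0,∞)`, and unbounded. -/
def Dpp (h : ℝ → ℝ) : Prop :=
  MonotoneOn h (Set.Ici 0) ∧ RightCts h ∧ h 0 = 0 ∧ (∀ t : ℝ, 0 < t → 0 < h t) ∧
    (∀ M : ℝ, ∃ t : ℝ, 0 ≤ t ∧ M < h t)

/-- `h` jumps at `u`: `h(u−) < h(u)`. -/
noncomputable def JumpAt (h : ℝ → ℝ) (u : ℝ) : Prop := llim h u < h u

/-- Compatibility condition (H1): whenever `g` jumps at `u`, the level set
`{r ≥ 0 : κ r = u}` has positive length. -/
def H1 (g κ : ℝ → ℝ) : Prop :=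
  ∀ u : ℝ, JumpAt g u → ∃ r₁ r₂ : ℝ, 0 ≤ r₁ ∧ r₁ < r₂ ∧ κ r₁ = u ∧ κ r₂ = u

/-- Compatibility condition (H2): whenever `κ(s−) < κ(s)`, `g(κ(s−)) = g(κ(s)−)`. -/
def H2 (g κ : ℝ → ℝ) : Prop :=
  ∀ s : ℝ, 0 ≤ s → llim κ s < κ s → g (llim κ s) = llim g (κ s)

-- Smooth composition `g ∘̃ κ`: equal to `g ∘ κ` outside the intervals
-- `[κ⁻¹(u−), κ⁻¹(u)]` over jump points `u` of `g`, and on each such interval the linear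
-- interpolation between `(κ⁻¹(u−), g(u−))` and `(κ⁻¹(u), g(u))`.
open scoped Classical in
noncomputable def stilde (g κ : ℝ → ℝ) (s : ℝ) : ℝ :=
  if h : ∃ u : ℝ, JumpAt g u ∧ s ∈ Set.Icc (llim (ginv κ) u) (ginv κ u) then
    let u := Classical.choose h
    llim g u + (g u - llim g u) * (s - llim (ginv κ) u) / (ginv κ u - llim (ginv κ) u)
  else g (κ s)

section Aux

variable {f g κ : ℝ → ℝ}

lemma ginv_set_nonempty (hκ : Dpp κ) (v : ℝ) : {t : ℝ | 0 < t ∧ v < κ t}.Nonempty := by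
  obtain ⟨t, ht0, htv⟩ := hκ.2.2.2.2 v
  refine ⟨t + 1, by linarith, lt_of_lt_of_le htv ?_⟩
  exact hκ.1 (mem_Ici.mpr ht0) (mem_Ici.mpr (by linarith)) (by linarith)

lemma ginv_bddBelow (κ : ℝ → ℝ) (v : ℝ) : BddBelow {t : ℝ | 0 < t ∧ v < κ t} :=
  ⟨0, fun _ hx => hx.1.le⟩

lemma ginv_nonneg (κ : ℝ → ℝ) (v : ℝ) : 0 ≤ ginv κ v :=
  Real.sInf_nonneg (fun _ hx => hx.1.le)

lemma ginv_le (_hκ : Dpp κ) {v t : ℝ} (ht : 0 < t) (h : v < κ t) : ginv κ v ≤ t :=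
  csInf_le (ginv_bddBelow κ v) ⟨ht, h⟩

lemma lt_kappa_of_ginv_lt (hκ : Dpp κ) {v t : ℝ} (h : ginv κ v < t) : v < κ t := by
  obtain ⟨t', ⟨ht'0, ht'⟩, ht't⟩ := exists_lt_of_csInf_lt (ginv_set_nonempty hκ v) h
  exact lt_of_lt_of_le ht'
    (hκ.1 (mem_Ici.mpr ht'0.le) (mem_Ici.mpr (ht'0.trans ht't).le) ht't.le)

lemma le_ginv (hκ : Dpp κ) {v r : ℝ} (h : ∀ t, 0 < t → v < κ t → r ≤ t) : r ≤ ginv κ v :=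
  le_csInf (ginv_set_nonempty hκ v) (fun t ht => h t ht.1 ht.2)

lemma ginv_mono (hκ : Dpp κ) : Monotone (ginv κ) := fun v w hvw =>
  le_csInf (ginv_set_nonempty hκ w)
    (fun t ht => csInf_le (ginv_bddBelow κ v) ⟨ht.1, lt_of_le_of_lt hvw ht.2⟩)

lemma ginv_image_bddAbove (hκ : Dpp κ) (u : ℝ) : BddAbove (ginv κ '' Ico 0 u) := by
  refine ⟨ginv κ u, ?_⟩
  rintro _ ⟨v, hv, rfl⟩
  exact ginv_mono hκ hv.2.le

lemma llimginv_le_ginv (hκ : Dpp κ) {u : ℝ} (hu : 0 < u) : llim (ginv κ) u ≤ ginv κ u := by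
  rw [llim, if_neg (not_le.mpr hu)]
  refine csSup_le ⟨ginv κ 0, ⟨0, ⟨le_rfl, hu⟩, rfl⟩⟩ ?_
  rintro _ ⟨v, hv, rfl⟩
  exact ginv_mono hκ hv.2.le

lemma ginv_le_llimginv (hκ : Dpp κ) {v u : ℝ} (hv : 0 ≤ v) (hvu : v < u) :
    ginv κ v ≤ llim (ginv κ) u := by
  rw [llim, if_neg (not_le.mpr (hv.trans_lt hvu))]
  exact le_csSup (ginv_image_bddAbove hκ u) ⟨v, ⟨hv, hvu⟩, rfl⟩

lemma llimginv_nonneg (hκ : Dpp κ) (u : ℝ) : 0 ≤ llim (ginv κ) u := by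
  rw [llim]
  split_ifs with h
  · exact ginv_nonneg κ 0
  · push_neg at h
    exact le_trans (ginv_nonneg κ 0)
      (le_csSup (ginv_image_bddAbove hκ u) ⟨0, ⟨le_rfl, h⟩, rfl⟩)

lemma ginv_nonpos_eq (hκ : Dpp κ) {u : ℝ} (hu : u ≤ 0) : ginv κ u = 0 := by
  refine le_antisymm ?_ (ginv_nonneg κ u)
  refine le_of_forall_pos_le_add (fun ε hε => ?_)
  have : ginv κ u ≤ ε := ginv_le hκ hε (lt_of_le_of_lt hu (hκ.2.2.2.1 ε hε))
  linarith

lemma llimginv_nonpos_eq (hκ : Dpp κ) {u : ℝ} (hu : u ≤ 0) : llim (ginv κ) u = 0 := by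
  rw [llim, if_pos hu]
  exact ginv_nonpos_eq hκ le_rfl

lemma kappa_eq_interior (hκ : Dpp κ) {u t : ℝ} (hu : 0 < u)
    (h1 : llim (ginv κ) u < t) (h2 : t < ginv κ u) : κ t = u := by
  have ht0 : 0 < t := lt_of_le_of_lt (llimginv_nonneg hκ u) h1
  have hle : κ t ≤ u := by
    by_contra hgt
    exact absurd (ginv_le hκ ht0 (not_le.mp hgt)) (not_le.mpr h2)
  have hge : u ≤ κ t := by
    by_contra hlt
    push_neg at hlt
    have hκt0 : 0 ≤ κ t := (hκ.2.2.2.1 t ht0).le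
    have h3 : ginv κ (κ t) < t := lt_of_le_of_lt (ginv_le_llimginv hκ hκt0 hlt) h1
    exact lt_irrefl _ (lt_kappa_of_ginv_lt hκ h3)
  linarith

lemma kappa_left (hκ : Dpp κ) {u : ℝ} (hu : 0 < u)
    (hnd : llim (ginv κ) u < ginv κ u) : κ (llim (ginv κ) u) = u := by
  have ha0 : 0 ≤ llim (ginv κ) u := llimginv_nonneg hκ u
  have h1 : Tendsto κ (𝓝[>] (llim (ginv κ) u)) (𝓝 (κ (llim (ginv κ) u))) :=
    (hκ.2.1 _ ha0).tendsto.mono_left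
      (nhdsWithin_mono _ (Ioi_subset_Ici le_rfl))
  have h2 : Tendsto κ (𝓝[>] (llim (ginv κ) u)) (𝓝 u) := by
    have hev : ∀ᶠ t in 𝓝[>] (llim (ginv κ) u), κ t = u := by
      filter_upwards [Ioo_mem_nhdsGT_of_mem (left_mem_Ico.mpr hnd)] with t ht
      exact kappa_eq_interior hκ hu ht.1 ht.2
    exact Tendsto.congr' (Filter.EventuallyEq.symm hev) tendsto_const_nhds
  exact tendsto_nhds_unique h1 h2

lemma kappa_le_of_lt_ginv (hκ : Dpp κ) {u t : ℝ} (hu : 0 < u) (ht0 : 0 ≤ t)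
    (ht : t < ginv κ u) : κ t ≤ u := by
  rcases ht0.eq_or_lt with h | h
  · rw [← h, hκ.2.2.1]; exact hu.le
  · by_contra hgt
    exact absurd (ginv_le hκ h (not_le.mp hgt)) (not_le.mpr ht)

lemma llim_kappa_right (hκ : Dpp κ) {u : ℝ} (hu : 0 < u)
    (hnd : llim (ginv κ) u < ginv κ u) : llim κ (ginv κ u) = u := by
  have hipos : 0 < ginv κ u := lt_of_le_of_lt (llimginv_nonneg hκ u) hnd
  rw [llim, if_neg (not_le.mpr hipos)]
  have hub : ∀ x ∈ κ '' Ico 0 (ginv κ u), x ≤ u := by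
    rintro _ ⟨t, ht, rfl⟩
    exact kappa_le_of_lt_ginv hκ hu ht.1 ht.2
  refine le_antisymm (csSup_le ⟨κ 0, ⟨0, ⟨le_rfl, hipos⟩, rfl⟩⟩ hub) ?_
  set t₀ := (llim (ginv κ) u + ginv κ u) / 2 with ht₀
  have h1 : llim (ginv κ) u < t₀ := by
    have := llimginv_nonneg hκ u; simp only [ht₀]; linarith
  have h2 : t₀ < ginv κ u := by simp only [ht₀]; linarith
  have h3 : κ t₀ = u := kappa_eq_interior hκ hu h1 h2
  have h4 : (0:ℝ) ≤ t₀ := le_trans (llimginv_nonneg hκ u) h1.le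
  calc u = κ t₀ := h3.symm
    _ ≤ sSup (κ '' Ico 0 (ginv κ u)) := le_csSup ⟨u, hub⟩ ⟨t₀, ⟨h4, h2⟩, rfl⟩

lemma kappa_ginv_ge (hκ : Dpp κ) (u : ℝ) : u ≤ κ (ginv κ u) := by
  have h1 : Tendsto κ (𝓝[>] (ginv κ u)) (𝓝 (κ (ginv κ u))) :=
    (hκ.2.1 _ (ginv_nonneg κ u)).tendsto.mono_left
      (nhdsWithin_mono _ (Ioi_subset_Ici le_rfl))
  refine ge_of_tendsto h1 ?_
  filter_upwards [self_mem_nhdsWithin] with t ht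
  exact (lt_kappa_of_ginv_lt hκ ht).le

lemma mem_interval_kappa (hκ : Dpp κ) {s : ℝ} (hs : 0 < s) (hv : 0 < κ s) :
    llim (ginv κ) (κ s) ≤ s ∧ s ≤ ginv κ (κ s) := by
  constructor
  · rw [llim, if_neg (not_le.mpr hv)]
    refine csSup_le ⟨ginv κ 0, ⟨0, ⟨le_rfl, hv⟩, rfl⟩⟩ ?_
    rintro _ ⟨w, hw, rfl⟩
    exact ginv_le hκ hs hw.2
  · refine le_ginv hκ (fun t ht0 htk => ?_)
    by_contra h
    push_neg at h
    exact absurd (hκ.1 (mem_Ici.mpr ht0.le) (mem_Ici.mpr hs.le) h.le) (not_le.mpr htk)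

lemma image_bddAbove (hmono : MonotoneOn g (Ici 0)) {u : ℝ} (hu : 0 < u) :
    BddAbove (g '' Ico 0 u) := by
  refine ⟨g u, ?_⟩
  rintro _ ⟨v, hv, rfl⟩
  exact hmono (mem_Ici.mpr hv.1) (mem_Ici.mpr hu.le) hv.2.le

lemma llim_le_self (hmono : MonotoneOn g (Ici 0)) {u : ℝ} (hu : 0 ≤ u) :
    llim g u ≤ g u := by
  rcases hu.eq_or_lt with h | h
  · rw [llim, if_pos h.symm.le, ← h]
  · rw [llim, if_neg (not_le.mpr h)]
    refine csSup_le ⟨g 0, ⟨0, ⟨le_rfl, h⟩, rfl⟩⟩ ?_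
    rintro _ ⟨v, hv, rfl⟩
    exact hmono (mem_Ici.mpr hv.1) (mem_Ici.mpr hu) hv.2.le

lemma self_le_llim (hmono : MonotoneOn g (Ici 0)) {v u : ℝ} (hv : 0 ≤ v) (hvu : v < u) :
    g v ≤ llim g u := by
  rw [llim, if_neg (not_le.mpr (hv.trans_lt hvu))]
  exact le_csSup (image_bddAbove hmono (hv.trans_lt hvu)) ⟨v, ⟨hv, hvu⟩, rfl⟩

lemma llim_add (hf : MonotoneOn f (Ici 0)) (hg : MonotoneOn g (Ici 0)) (u : ℝ) :
    llim (fun t => f t + g t) u = llim f u + llim g u := by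
  unfold llim
  split_ifs with h
  · rfl
  · push_neg at h
    have hne : (Ico (0:ℝ) u).Nonempty := ⟨0, le_rfl, h⟩
    have hbF := image_bddAbove hf h
    have hbG := image_bddAbove hg h
    have hbS : BddAbove ((fun t => f t + g t) '' Ico 0 u) := by
      refine ⟨f u + g u, ?_⟩
      rintro _ ⟨v, hv, rfl⟩
      exact add_le_add (hf (mem_Ici.mpr hv.1) (mem_Ici.mpr h.le) hv.2.le)
        (hg (mem_Ici.mpr hv.1) (mem_Ici.mpr h.le) hv.2.le)
    have key : ∀ v ∈ Ico (0:ℝ) u, ∀ w ∈ Ico (0:ℝ) u,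
        f v + g w ≤ sSup ((fun t => f t + g t) '' Ico 0 u) := by
      intro v hv w hw
      have hz : max v w ∈ Ico (0:ℝ) u := ⟨le_max_of_le_left hv.1, max_lt hv.2 hw.2⟩
      have h1 : f v ≤ f (max v w) :=
        hf (mem_Ici.mpr hv.1) (mem_Ici.mpr hz.1) (le_max_left v w)
      have h2 : g w ≤ g (max v w) :=
        hg (mem_Ici.mpr hw.1) (mem_Ici.mpr hz.1) (le_max_right v w)
      have h3 : f (max v w) + g (max v w) ≤ sSup ((fun t => f t + g t) '' Ico 0 u) :=
        le_csSup hbS ⟨max v w, hz, rfl⟩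
      linarith
    refine le_antisymm ?_ ?_
    · refine csSup_le (hne.image _) ?_
      rintro _ ⟨v, hv, rfl⟩
      exact add_le_add (le_csSup hbF ⟨v, hv, rfl⟩) (le_csSup hbG ⟨v, hv, rfl⟩)
    · have hG : ∀ v ∈ Ico (0:ℝ) u, sSup (g '' Ico 0 u) ≤
          sSup ((fun t => f t + g t) '' Ico 0 u) - f v := by
        intro v hv
        refine csSup_le (hne.image _) ?_
        rintro _ ⟨w, hw, rfl⟩
        have := key v hv w hw
        linarith
      have hF : sSup (f '' Ico 0 u) ≤
          sSup ((fun t => f t + g t) '' Ico 0 u) - sSup (g '' Ico 0 u) := by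
        refine csSup_le (hne.image _) ?_
        rintro _ ⟨v, hv, rfl⟩
        have := hG v hv
        linarith
      linarith
end Aux

section Master

variable {f g κ : ℝ → ℝ}

lemma jumpAt_add (hf : MonotoneOn f (Ici 0)) (hg : MonotoneOn g (Ici 0)) {u : ℝ}
    (h : JumpAt (fun t => f t + g t) u) : JumpAt f u ∨ JumpAt g u := by
  have h' : llim (fun t => f t + g t) u < f u + g u := h
  rw [llim_add hf hg] at h'
  by_contra hc
  push_neg at hc
  have h1 : ¬ llim f u < f u := hc.1
  have h2 : ¬ llim g u < g u := hc.2
  push_neg at h1 h2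
  linarith

lemma jump_nondeg (hκ : Dpp κ) (hH1 : H1 g κ) {u : ℝ} (hu : 0 < u) (hj : JumpAt g u) :
    llim (ginv κ) u < ginv κ u := by
  obtain ⟨r₁, r₂, hr₁0, hr₁₂, hκ₁, hκ₂⟩ := hH1 u hj
  have hr₁pos : 0 < r₁ := by
    rcases hr₁0.eq_or_lt with h | h
    · exfalso
      rw [← h, hκ.2.2.1] at hκ₁
      linarith
    · exact h
  have hl : llim (ginv κ) u ≤ r₁ := by
    rw [llim, if_neg (not_le.mpr hu)]
    refine csSup_le ⟨ginv κ 0, ⟨0, ⟨le_rfl, hu⟩, rfl⟩⟩ ?_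
    rintro _ ⟨v, hv, rfl⟩
    exact ginv_le hκ hr₁pos (hκ₁ ▸ hv.2)
  have hr : r₂ ≤ ginv κ u := by
    refine le_ginv hκ (fun t ht0 htu => ?_)
    by_contra hlt
    push_neg at hlt
    have : κ t ≤ κ r₂ :=
      hκ.1 (mem_Ici.mpr ht0.le) (mem_Ici.mpr (hr₁0.trans hr₁₂.le)) hlt.le
    rw [hκ₂] at this
    linarith
  linarith

lemma witness_pos (hκ : Dpp κ) {s u : ℝ} (hs : 0 < s)
    (hmem : s ∈ Icc (llim (ginv κ) u) (ginv κ u)) : 0 < u := by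
  by_contra h
  push_neg at h
  have h2 := hmem.2
  rw [ginv_nonpos_eq hκ h] at h2
  linarith

lemma Dpp_add (h1 : Dpp f) (h2 : Dpp g) : Dpp (fun t => f t + g t) := by
  obtain ⟨m1, r1, z1, p1, u1⟩ := h1
  obtain ⟨m2, r2, z2, p2, u2⟩ := h2
  refine ⟨fun a ha b hb hab => add_le_add (m1 ha hb hab) (m2 ha hb hab),
    fun x hx => (r1 x hx).add (r2 x hx), by simp [z1, z2],
    fun t ht => add_pos (p1 t ht) (p2 t ht), fun M => ?_⟩
  obtain ⟨t, ht, hM⟩ := u1 M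
  have hg0 : 0 ≤ g t := by
    have := m2 (mem_Ici.mpr le_rfl) (mem_Ici.mpr ht) ht
    rw [z2] at this
    exact this
  exact ⟨t, ht, show M < f t + g t by linarith⟩

lemma stilde_zero (hg : Dpp g) (hκ : Dpp κ) : stilde g κ 0 = 0 := by
  by_cases hex : ∃ u : ℝ, JumpAt g u ∧ (0:ℝ) ∈ Set.Icc (llim (ginv κ) u) (ginv κ u)
  · rw [stilde, dif_pos hex]
    obtain ⟨hj, hmem⟩ := Classical.choose_spec hex
    set c := Classical.choose hex with hc
    show llim g c + (g c - llim g c) * (0 - llim (ginv κ) c) / (ginv κ c - llim (ginv κ) c) = 0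
    have hl0 : llim (ginv κ) c = 0 := le_antisymm hmem.1 (llimginv_nonneg hκ c)
    rw [hl0, sub_zero, sub_zero, mul_zero, zero_div, add_zero]
    rcases le_or_gt c 0 with h | h
    · rw [llim, if_pos h, hg.2.2.1]
    · exfalso
      have h2 : ginv κ (c/2) ≤ 0 := by
        have := ginv_le_llimginv hκ (le_of_lt (by linarith : (0:ℝ) < c/2)) (by linarith : c/2 < c)
        rw [hl0] at this
        exact this
      have h3 : ∀ t : ℝ, 0 < t → c/2 < κ t := fun t ht =>
        lt_kappa_of_ginv_lt hκ (lt_of_le_of_lt h2 ht)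
      have h4 : Tendsto κ (𝓝[>] (0:ℝ)) (𝓝 (κ 0)) :=
        (hκ.2.1 0 le_rfl).tendsto.mono_left (nhdsWithin_mono _ (Ioi_subset_Ici le_rfl))
      have h5 : c/2 ≤ κ 0 := by
        refine ge_of_tendsto h4 ?_
        filter_upwards [self_mem_nhdsWithin] with t ht
        exact (h3 t ht).le
      rw [hκ.2.2.1] at h5
      linarith
  · rw [stilde, dif_neg hex, hκ.2.2.1, hg.2.2.1]

lemma stilde_eq (hg : Dpp g) (hκ : Dpp κ) (hH1 : H1 g κ) (hH2 : H2 g κ)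
    {s u : ℝ} (hs : 0 < s) (hu : 0 < u) (hnd : llim (ginv κ) u < ginv κ u)
    (hsl : llim (ginv κ) u ≤ s) (hsr : s ≤ ginv κ u) :
    stilde g κ s =
      llim g u + (g u - llim g u) * (s - llim (ginv κ) u) / (ginv κ u - llim (ginv κ) u) := by
  by_cases hex : ∃ u' : ℝ, JumpAt g u' ∧ s ∈ Set.Icc (llim (ginv κ) u') (ginv κ u')
  · rw [stilde, dif_pos hex]
    obtain ⟨hj, hmem⟩ := Classical.choose_spec hex
    set c := Classical.choose hex with hcdef
    show llim g c + (g c - llim g c) * (s - llim (ginv κ) c) / (ginv κ c - llim (ginv κ) c) =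
      llim g u + (g u - llim g u) * (s - llim (ginv κ) u) / (ginv κ u - llim (ginv κ) u)
    have hc0 : 0 < c := witness_pos hκ hs hmem
    have hnd₀ : llim (ginv κ) c < ginv κ c := jump_nondeg hκ hH1 hc0 hj
    rcases lt_trichotomy c u with h | h | h
    · -- c < u : s = ginv κ c = llim (ginv κ) u
      have hic : ginv κ c ≤ llim (ginv κ) u := ginv_le_llimginv hκ hc0.le h
      have hseq : s = ginv κ c := le_antisymm hmem.2 (by linarith [hmem.2, hic, hsl])
      have hseq' : s = llim (ginv κ) u := le_antisymm (by linarith [hmem.2]) hsl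
      have hκs : κ s = u := by rw [hseq']; exact kappa_left hκ hu hnd
      have hκsl : llim κ s = c := by rw [hseq]; exact llim_kappa_right hκ hc0 hnd₀
      have hH2s : g c = llim g u := by
        have := hH2 s hs.le (by rw [hκs, hκsl]; exact h)
        rw [hκs, hκsl] at this
        exact this
      rw [hseq] at *
      rw [mul_div_assoc, div_self (ne_of_gt (sub_pos.mpr hnd₀)), mul_one]
      rw [← hseq', hseq']
      rw [sub_self, mul_zero, zero_div, add_zero]
      linarith [hH2s]
    · rw [h]
    · -- u < c : s = ginv κ u = llim (ginv κ) c
      have hic : ginv κ u ≤ llim (ginv κ) c := ginv_le_llimginv hκ hu.le h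
      have hseq : s = ginv κ u := le_antisymm hsr (by linarith [hmem.1])
      have hseq' : s = llim (ginv κ) c := le_antisymm (by linarith [hsr]) hmem.1
      have hκs : κ s = c := by rw [hseq']; exact kappa_left hκ hc0 hnd₀
      have hκsl : llim κ s = u := by rw [hseq]; exact llim_kappa_right hκ hu hnd
      have hH2s : g u = llim g c := by
        have := hH2 s hs.le (by rw [hκs, hκsl]; exact h)
        rw [hκs, hκsl] at this
        exact this
      rw [hseq', sub_self, mul_zero, zero_div, add_zero]
      rw [← hseq', hseq]
      rw [mul_div_assoc, div_self (ne_of_gt (sub_pos.mpr hnd)), mul_one]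
      linarith [hH2s]
  · rw [stilde, dif_neg hex]
    rcases hsr.lt_or_eq with hlt | heq
    · -- s < ginv κ u, so κ s = u and g does not jump at u
      have hκs : κ s = u := by
        rcases hsl.lt_or_eq with h | h
        · exact kappa_eq_interior hκ hu h hlt
        · rw [← h]; exact kappa_left hκ hu hnd
      have hnj : ¬ JumpAt g u := fun hj => hex ⟨u, hj, ⟨hsl, hsr⟩⟩
      have hle : g u ≤ llim g u := not_lt.mp hnj
      have heqq : llim g u = g u := le_antisymm (llim_le_self hg.1 hu.le) hle
      rw [hκs, heqq, sub_self, zero_mul, zero_div, add_zero]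
    · -- s = ginv κ u
      rw [heq, mul_div_assoc, div_self (ne_of_gt (sub_pos.mpr hnd)), mul_one]
      have hge : u ≤ κ (ginv κ u) := kappa_ginv_ge hκ u
      have goal : g (κ s) = g u := by
        rcases hge.eq_or_lt with h | h
        · rw [heq, ← h]
        · have hκspos : 0 < κ s := by rw [heq]; linarith
          have hκsl : llim κ s = u := by rw [heq]; exact llim_kappa_right hκ hu hnd
          have hH2s : g u = llim g (κ s) := by
            have := hH2 s hs.le (by rw [hκsl, heq]; exact h)
            rw [hκsl] at this
            exact this
          have hnj : ¬ JumpAt g (κ s) := by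
            intro hj
            obtain ⟨hl, hr⟩ := mem_interval_kappa hκ hs hκspos
            exact hex ⟨κ s, hj, ⟨hl, hr⟩⟩
          have hle : g (κ s) ≤ llim g (κ s) := not_lt.mp hnj
          have heqq : llim g (κ s) = g (κ s) :=
            le_antisymm (llim_le_self hg.1 hκspos.le) hle
          rw [← heqq, ← hH2s]
      rw [heq] at goal
      rw [goal]
      linarith

end Master

/-- Additivity of smooth composition: `(h₁ ∘̃ κ) + (h₂ ∘̃ κ) = (h₁ + h₂) ∘̃ κ`. -/
theorem stmt10 (h₁ h₂ κ : ℝ → ℝ) (hh₁ : Dpp h₁) (hh₂ : Dpp h₂) (hκ : Dpp κ)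
    (h11 : H1 h₁ κ) (h21 : H2 h₁ κ) (h12 : H1 h₂ κ) (h22 : H2 h₂ κ) :
    (H1 (fun t => h₁ t + h₂ t) κ ∧ H2 (fun t => h₁ t + h₂ t) κ) ∧
    (∀ s : ℝ, 0 ≤ s →
      stilde h₁ κ s + stilde h₂ κ s = stilde (fun t => h₁ t + h₂ t) κ s) := by
  have hm1 := hh₁.1
  have hm2 := hh₂.1
  have hsum : Dpp (fun t => h₁ t + h₂ t) := Dpp_add hh₁ hh₂
  have hH1s : H1 (fun t => h₁ t + h₂ t) κ := fun u hj =>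
    (jumpAt_add hm1 hm2 hj).elim (h11 u) (h12 u)
  have hH2s : H2 (fun t => h₁ t + h₂ t) κ := by
    intro s hs hlt
    show h₁ (llim κ s) + h₂ (llim κ s) = llim (fun t => h₁ t + h₂ t) (κ s)
    rw [llim_add hm1 hm2, ← h21 s hs hlt, ← h22 s hs hlt]
  refine ⟨⟨hH1s, hH2s⟩, fun s hs => ?_⟩
  rcases hs.eq_or_lt with h | h
  · rw [← h, stilde_zero hh₁ hκ, stilde_zero hh₂ hκ, stilde_zero hsum hκ]
    norm_num
  · by_cases hadm : ∃ u : ℝ, 0 < u ∧ llim (ginv κ) u < ginv κ u ∧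
        llim (ginv κ) u ≤ s ∧ s ≤ ginv κ u
    · obtain ⟨u, hu, hnd, hsl, hsr⟩ := hadm
      rw [stilde_eq hh₁ hκ h11 h21 h hu hnd hsl hsr,
          stilde_eq hh₂ hκ h12 h22 h hu hnd hsl hsr,
          stilde_eq hsum hκ hH1s hH2s h hu hnd hsl hsr,
          llim_add hm1 hm2]
      have harith : ((fun t => h₁ t + h₂ t) u - (llim h₁ u + llim h₂ u)) * (s - llim (ginv κ) u)
          = (h₁ u - llim h₁ u) * (s - llim (ginv κ) u)
            + (h₂ u - llim h₂ u) * (s - llim (ginv κ) u) := by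
        show (h₁ u + h₂ u - (llim h₁ u + llim h₂ u)) * (s - llim (ginv κ) u) = _
        ring
      rw [harith, add_div]
      ring
    · have nex : ∀ (G : ℝ → ℝ), H1 G κ →
          ¬ ∃ u : ℝ, JumpAt G u ∧ s ∈ Set.Icc (llim (ginv κ) u) (ginv κ u) := by
        rintro G hG ⟨u, hj, hmem⟩
        have hu : 0 < u := witness_pos hκ h hmem
        exact hadm ⟨u, hu, jump_nondeg hκ hG hu hj, hmem.1, hmem.2⟩
      rw [stilde, dif_neg (nex h₁ h11), stilde, dif_neg (nex h₂ h12),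
          stilde, dif_neg (nex _ hH1s)]
end

section
/- Let g₁,…,g_m be non-decreasing, right-continuous, unbounded functions on [0,∞) with gᵢ(0)=0 and gᵢ(t)>0 for t>0; let f := Σᵢ gᵢ⁻¹, κ := f⁻¹, γ = (g₁⁻¹ ∘̃ κ, …, g_m⁻¹ ∘̃ κ). Suppose t = (t₁,…,t_m) ∈ ℝ₊^m satisfies gᵢ(tᵢ) = g_{i+1}(t_{i+1}) for all i ∈ [m−1], and for each i the function gᵢ is strictly increasing from the right at tᵢ (i.e., gᵢ(s) > gᵢ(tᵢ) for all s > tᵢ). Then t = γ(t₁ + ⋯ + t_m). -/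
open Set Function Filter

/- Auxiliary lemmas -/

lemma ginv_bdd (h : ℝ → ℝ) (s : ℝ) : BddBelow {u : ℝ | 0 < u ∧ s < h u} :=
  ⟨0, fun x hx => hx.1.le⟩

lemma ginv_nonneg' (h : ℝ → ℝ) (s : ℝ) : 0 ≤ ginv h s :=
  Real.sInf_nonneg fun x hx => hx.1.le

lemma ginv_mono' (h : ℝ → ℝ) (hne : ∀ s, {u : ℝ | 0 < u ∧ s < h u}.Nonempty) :
    Monotone (ginv h) := fun s s' hss' =>
  csInf_le_csInf (ginv_bdd h s) (hne s') (fun u hu => ⟨hu.1, lt_of_le_of_lt hss' hu.2⟩)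

lemma le_ginv_s15 (h : ℝ → ℝ) {s b : ℝ} (hne : {u : ℝ | 0 < u ∧ s < h u}.Nonempty)
    (hb : ∀ u, 0 < u → s < h u → b ≤ u) : b ≤ ginv h s :=
  le_csInf hne fun u hu => hb u hu.1 hu.2

lemma ginv_le_s15 (h : ℝ → ℝ) {s u : ℝ} (h1 : 0 < u) (h2 : s < h u) : ginv h s ≤ u :=
  csInf_le (ginv_bdd h s) ⟨h1, h2⟩

/-- Right-continuity of the generalized inverse, in the form we need. -/
lemma ginv_rc (h : ℝ → ℝ) {s ε : ℝ} (hne : {u : ℝ | 0 < u ∧ s < h u}.Nonempty)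
    (hε : 0 < ε) : ∃ s', s < s' ∧ ginv h s' < ginv h s + ε := by
  obtain ⟨u, hu, hlt⟩ := exists_lt_of_csInf_lt hne (lt_add_of_pos_right (ginv h s) hε)
  refine ⟨(s + h u) / 2, by linarith [hu.2], ?_⟩
  exact lt_of_le_of_lt (ginv_le_s15 h hu.1 (by linarith [hu.2])) hlt

/-- Case analysis principle for `stilde`. -/
lemma stilde_spec (g κ : ℝ → ℝ) (s T : ℝ)
    (h1 : ∀ u, JumpAt g u → s ∈ Set.Icc (llim (ginv κ) u) (ginv κ u) →
      llim g u + (g u - llim g u) * (s - llim (ginv κ) u) / (ginv κ u - llim (ginv κ) u) = T)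
    (h2 : g (κ s) = T) : stilde g κ s = T := by
  unfold stilde
  split
  · next h => exact h1 _ (Classical.choose_spec h).1 (Classical.choose_spec h).2
  · exact h2

/-- If `gᵢ(tᵢ) = g_{i+1}(t_{i+1})` and each `gᵢ` is strictly increasing from the
right at `tᵢ`, then `t = γ(‖t‖₁)`. -/
theorem stmt15 (m : ℕ) (g : Fin m → ℝ → ℝ) (hg : ∀ i, Dpp (g i))
    (f κ : ℝ → ℝ) (γ : Fin m → ℝ → ℝ)
    (hf : f = fun s => ∑ j, ginv (g j) s) (hκ : κ = ginv f)
    (hγ : ∀ i, γ i = stilde (ginv (g i)) κ)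
    (t : Fin m → ℝ) (ht : ∀ i, 0 ≤ t i)
    (hchain : ∀ (i : ℕ) (hi : i + 1 < m),
      g ⟨i, Nat.lt_of_succ_lt hi⟩ (t ⟨i, Nat.lt_of_succ_lt hi⟩) = g ⟨i + 1, hi⟩ (t ⟨i + 1, hi⟩))
    (hright : ∀ i, ∀ s : ℝ, t i < s → g i (t i) < g i s) :
    ∀ i, t i = γ i (∑ j, t j) := by
  intro i
  -- components of Dpp
  have hgm : ∀ j, MonotoneOn (g j) (Set.Ici 0) := fun j => (hg j).1
  have hgrc : ∀ j, RightCts (g j) := fun j => (hg j).2.1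
  have hg0 : ∀ j, g j 0 = 0 := fun j => (hg j).2.2.1
  have hgpos : ∀ j, ∀ x : ℝ, 0 < x → 0 < g j x := fun j => (hg j).2.2.2.1
  have hgunb : ∀ j, ∀ M : ℝ, ∃ x : ℝ, 0 ≤ x ∧ M < g j x := fun j => (hg j).2.2.2.2
  have hne : ∀ j s, {u : ℝ | 0 < u ∧ s < g j u}.Nonempty := by
    intro j s
    obtain ⟨u, hu0, hu⟩ := hgunb j (max s 0)
    have hu0' : 0 < u := by
      rcases lt_or_eq_of_le hu0 with h | h
      · exact h
      · exfalso; rw [← h, hg0 j] at hu; exact absurd hu (not_lt.2 (le_max_right s 0))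
    exact ⟨u, hu0', lt_of_le_of_lt (le_max_left s 0) hu⟩
  have hgim : ∀ j, Monotone (ginv (g j)) := fun j => ginv_mono' _ (hne j)
  -- the common value c and the total S
  set S := ∑ j, t j with hSdef
  set c := g i (t i) with hcdef
  have hS0 : 0 ≤ S := Finset.sum_nonneg fun j _ => ht j
  have hc0 : 0 ≤ c := by
    have h1 := hgm i (Set.mem_Ici.mpr le_rfl) (Set.mem_Ici.mpr (ht i)) (ht i)
    rw [hg0 i] at h1; exact h1
  -- all chain values coincide
  have haux : ∀ n (hn : n < m), g ⟨n, hn⟩ (t ⟨n, hn⟩)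
      = g ⟨0, Nat.zero_lt_of_lt hn⟩ (t ⟨0, Nat.zero_lt_of_lt hn⟩) := by
    intro n
    induction n with
    | zero => intro hn; rfl
    | succ k ih => intro hn; rw [← hchain k hn]; exact ih (Nat.lt_of_succ_lt hn)
  have hcc : ∀ j : Fin m, g j (t j) = c := by
    intro j
    have h1 := haux j.1 j.2
    have h2 := haux i.1 i.2
    exact h1.trans h2.symm
  -- generalized inverses at c give back t
  have htinv : ∀ j, ginv (g j) c = t j := by
    intro j
    have hset : {u : ℝ | 0 < u ∧ c < g j u} = Set.Ioi (t j) := by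
      ext u
      simp only [Set.mem_setOf_eq, Set.mem_Ioi]
      constructor
      · rintro ⟨hu0, hu⟩
        by_contra hle
        push_neg at hle
        have h1 := hgm j (Set.mem_Ici.mpr hu0.le) (Set.mem_Ici.mpr (ht j)) hle
        rw [hcc j] at h1
        linarith
      · intro hu
        refine ⟨lt_of_le_of_lt (ht j) hu, ?_⟩
        rw [← hcc j]
        exact hright j u hu
    rw [ginv, hset, csInf_Ioi]
  have hfv : ∀ v, f v = ∑ j, ginv (g j) v := fun v => by rw [hf]
  have hfc : f c = S := by rw [hfv]; exact Finset.sum_congr rfl fun j _ => htinv j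
  have hfmono : Monotone f := by
    intro a b hab; rw [hfv, hfv]; exact Finset.sum_le_sum fun j _ => hgim j hab
  have hf0le : ∀ v, 0 ≤ f v := fun v => by
    rw [hfv]; exact Finset.sum_nonneg fun j _ => ginv_nonneg' _ _
  have hfne : ∀ s, {w : ℝ | 0 < w ∧ s < f w}.Nonempty := by
    intro s
    set M := max s 0 + 1 with hM
    have hM0 : 0 < M := lt_of_le_of_lt (le_max_right s 0) (lt_add_one _)
    have hw0 : 0 < g i M := hgpos i M hM0
    refine ⟨g i M, hw0, ?_⟩
    have h1 : M ≤ ginv (g i) (g i M) := by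
      apply le_ginv_s15 _ (hne i _)
      intro u hu0 hu
      by_contra hc'
      push_neg at hc'
      exact absurd hu (not_lt.2 (hgm i (Set.mem_Ici.mpr hu0.le) (Set.mem_Ici.mpr hM0.le) hc'.le))
    have h2 : ginv (g i) (g i M) ≤ f (g i M) := by
      rw [hfv]
      exact Finset.single_le_sum (fun j _ => ginv_nonneg' _ _) (Finset.mem_univ i)
    have h3 : s < M := lt_of_le_of_lt (le_max_left s 0) (lt_add_one _)
    linarith
  have hκmono : Monotone κ := by rw [hκ]; exact ginv_mono' f hfne
  -- f strictly exceeds S beyond c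
  have hfr : ∀ r, c < r → S < f r := by
    intro r hr
    have hto : Filter.Tendsto (g i) (nhdsWithin (t i) (Set.Ioi (t i))) (nhds c) :=
      ((hgrc i (t i) (ht i)).tendsto).mono_left (nhdsWithin_mono _ Set.Ioi_subset_Ici_self)
    have h1 : ∀ᶠ u in nhdsWithin (t i) (Set.Ioi (t i)), g i u < r :=
      hto.eventually (eventually_iff_exists_mem.2 ⟨Set.Iio r, Iio_mem_nhds hr, fun x hx => hx⟩)
    obtain ⟨u, hult, hu_mem⟩ := (h1.and eventually_mem_nhdsWithin).exists
    have hti_u : t i < u := hu_mem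
    have hgr : ∀ j, t j ≤ ginv (g j) r := fun j => by
      rw [← htinv j]; exact hgim j hr.le
    have hgir : u ≤ ginv (g i) r := by
      apply le_ginv_s15 _ (hne i r)
      intro b hb0 hbr
      by_contra hc'
      push_neg at hc'
      have h2 : g i b ≤ g i u := hgm i (Set.mem_Ici.mpr hb0.le)
        (Set.mem_Ici.mpr (le_trans (ht i) hti_u.le)) hc'.le
      linarith
    rw [hfv]
    exact Finset.sum_lt_sum (fun j _ => hgr j)
      ⟨i, Finset.mem_univ i, lt_of_lt_of_le hti_u hgir⟩
  have hfle : ∀ r, r ≤ c → f r ≤ S := by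
    intro r hr
    calc f r ≤ f c := hfmono hr
    _ = S := hfc
  have hκc : κ S = c := by
    rw [hκ]
    have hset : {r : ℝ | 0 < r ∧ S < f r} = Set.Ioi c := by
      ext r
      simp only [Set.mem_setOf_eq, Set.mem_Ioi]
      constructor
      · rintro ⟨hr0, hr⟩
        by_contra hle
        push_neg at hle
        exact absurd hr (not_lt.2 (hfle r hle))
      · intro hr
        exact ⟨lt_of_le_of_lt hc0 hr, hfr r hr⟩
    rw [ginv, hset, csInf_Ioi]
  -- right-continuity of f (through those of the ginv (g j))
  have hm0 : 0 < (m : ℝ) := by exact_mod_cast i.pos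
  have hfrc : ∀ v r, f v < r → ∃ v', v < v' ∧ f v' < r := by
    intro v r hvr
    set ε := (r - f v) / m with hε
    have hε0 : 0 < ε := div_pos (by linarith) hm0
    have H : ∀ j : Fin m, ∃ s', v < s' ∧ ginv (g j) s' < ginv (g j) v + ε :=
      fun j => ginv_rc (g j) (hne j v) hε0
    choose s' hs' using H
    have hune : (Finset.univ : Finset (Fin m)).Nonempty := ⟨i, Finset.mem_univ i⟩
    refine ⟨Finset.univ.inf' hune s', ?_, ?_⟩
    · exact (Finset.lt_inf'_iff hune).mpr fun j _ => (hs' j).1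
    · have h1 : ∀ j : Fin m, ginv (g j) (Finset.univ.inf' hune s') < ginv (g j) v + ε :=
        fun j => lt_of_le_of_lt (hgim j (Finset.inf'_le s' (Finset.mem_univ j))) (hs' j).2
      have h2 : f (Finset.univ.inf' hune s') < ∑ j : Fin m, (ginv (g j) v + ε) := by
        rw [hfv]
        exact Finset.sum_lt_sum_of_nonempty hune fun j _ => h1 j
      have h3 : ∑ j : Fin m, (ginv (g j) v + ε) = f v + m * ε := by
        rw [Finset.sum_add_distrib, Finset.sum_const, hfv, Finset.card_univ,
          Fintype.card_fin, nsmul_eq_mul]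
      have h4 : (m : ℝ) * ε = r - f v := by
        rw [hε, mul_div_cancel₀ _ (ne_of_gt hm0)]
      linarith
  have hκgt : ∀ v r, f v < r → v < κ r := by
    intro v r hvr
    obtain ⟨v', hv', hfv'⟩ := hfrc v r hvr
    rw [hκ]
    refine lt_of_lt_of_le hv' (le_ginv_s15 f (hfne r) ?_)
    intro w hw0 hwr
    by_contra hc'
    push_neg at hc'
    exact absurd hwr (not_lt.2 (le_of_lt (lt_of_le_of_lt (hfmono hc'.le) hfv')))
  have hκnem : ∀ v, {r : ℝ | 0 < r ∧ v < κ r}.Nonempty := by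
    intro v
    refine ⟨max (f (max v 0 + 1)) 0 + 1,
      lt_of_le_of_lt (le_max_right _ 0) (lt_add_one _), ?_⟩
    have h1 := hκgt (max v 0 + 1) (max (f (max v 0 + 1)) 0 + 1)
      (lt_of_le_of_lt (le_max_left _ 0) (lt_add_one _))
    exact lt_of_le_of_lt (le_trans (le_max_left v 0) (le_of_lt (lt_add_one _))) h1
  have hginvκ_mono : Monotone (ginv κ) := ginv_mono' κ hκnem
  have hAle : ∀ v, ginv κ v ≤ f v := by
    intro v
    have hsub : Set.Ioi (f v) ⊆ {r : ℝ | 0 < r ∧ v < κ r} :=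
      fun r hr => ⟨lt_of_le_of_lt (hf0le v) hr, hκgt v r hr⟩
    calc ginv κ v ≤ sInf (Set.Ioi (f v)) :=
          csInf_le_csInf (ginv_bdd κ v) ⟨f v + 1, Set.mem_Ioi.mpr (lt_add_one _)⟩ hsub
    _ = f v := csInf_Ioi
  -- now the stilde case analysis
  rw [hγ i]
  refine (stilde_spec (ginv (g i)) κ S (t i) ?_ ?_).symm
  · -- jump case
    intro u hjump hmem
    have hjump' : llim (ginv (g i)) u < ginv (g i) u := hjump
    have hu0 : 0 < u := by
      by_contra hu0
      push_neg at hu0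
      rw [llim, if_pos hu0] at hjump'
      exact absurd hjump' (not_lt.2 (hgim i hu0))
    have huc : u ≤ c := by
      by_contra hcu
      push_neg at hcu
      set v := (c + u) / 2 with hv
      have hcv : c < v := by rw [hv]; linarith
      have hvu : v < u := by rw [hv]; linarith
      have hv0 : 0 ≤ v := le_of_lt (lt_of_le_of_lt hc0 hcv)
      obtain ⟨r, hSr, hrv⟩ := ginv_rc f (hfne S) (show (0:ℝ) < v - c by linarith)
      have hκrv : κ r < v := by
        have h1 : ginv f S = c := by rw [← hκ]; exact hκc
        rw [hκ]; rw [h1] at hrv; linarith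
      have hSκv : S < ginv κ v := by
        refine lt_of_lt_of_le hSr (le_ginv_s15 κ (hκnem v) ?_)
        intro b hb0 hvb
        by_contra hbr
        push_neg at hbr
        exact absurd hvb (not_lt.2 (le_of_lt (lt_of_le_of_lt (hκmono hbr.le) hκrv)))
      have hbdd : BddAbove (ginv κ '' Set.Ico 0 u) := by
        refine ⟨ginv κ u, ?_⟩
        rintro x ⟨w, hw, rfl⟩
        exact hginvκ_mono hw.2.le
      have hvA : ginv κ v ≤ llim (ginv κ) u := by
        rw [llim, if_neg (not_le.2 hu0)]
        exact le_csSup hbdd ⟨v, ⟨hv0, hvu⟩, rfl⟩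
      have hAS := hmem.1
      linarith
    have hfuS : S ≤ f u := le_trans hmem.2 (hAle u)
    have hfu : f u = S := le_antisymm (hfle u huc) hfuS
    have hBu : ginv κ u = S := le_antisymm (le_trans (hAle u) (le_of_eq hfu)) hmem.2
    have hlej : ∀ j, ginv (g j) u ≤ t j := fun j => by
      rw [← htinv j]; exact hgim j huc
    have hgiu : ginv (g i) u = t i := by
      by_contra hne'
      have hlt : ginv (g i) u < t i := lt_of_le_of_ne (hlej i) hne'
      have h1 : f u < S := by
        rw [hfv]
        exact Finset.sum_lt_sum (fun j _ => hlej j) ⟨i, Finset.mem_univ i, hlt⟩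
      linarith [hfu]
    have hLi : llim (ginv (g i)) u < t i := by rw [← hgiu]; exact hjump'
    have hAltS : llim (ginv κ) u < S := by
      rw [llim, if_neg (not_le.2 hu0)]
      have himne : (ginv κ '' Set.Ico 0 u).Nonempty := ⟨ginv κ 0, ⟨0, ⟨le_rfl, hu0⟩, rfl⟩⟩
      refine lt_of_le_of_lt (csSup_le himne ?_)
        (show S - (t i - llim (ginv (g i)) u) < S by linarith)
      rintro x ⟨v, ⟨hv0, hvu⟩, rfl⟩
      have h2 : ginv (g i) v ≤ llim (ginv (g i)) u := by
        rw [llim, if_neg (not_le.2 hu0)]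
        refine le_csSup ⟨ginv (g i) u, ?_⟩ ⟨v, ⟨hv0, hvu⟩, rfl⟩
        rintro y ⟨w, hw, rfl⟩
        exact hgim i hw.2.le
      have h3 : ∀ j, ginv (g j) v ≤ t j := fun j => by
        rw [← htinv j]; exact hgim j (le_trans hvu.le huc)
      have h4 : f v ≤ llim (ginv (g i)) u + (S - t i) := by
        rw [hfv]
        have e1 : ginv (g i) v + ∑ j ∈ Finset.univ.erase i, ginv (g j) v
            = ∑ j, ginv (g j) v :=
          Finset.add_sum_erase Finset.univ (fun j => ginv (g j) v) (Finset.mem_univ i)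
        have e2 : t i + ∑ j ∈ Finset.univ.erase i, t j = S :=
          Finset.add_sum_erase Finset.univ t (Finset.mem_univ i)
        have e3 : ∑ j ∈ Finset.univ.erase i, ginv (g j) v
            ≤ ∑ j ∈ Finset.univ.erase i, t j :=
          Finset.sum_le_sum fun j _ => h3 j
        linarith
      linarith [hAle v]
    rw [hBu, hgiu]
    have hne0 : S - llim (ginv κ) u ≠ 0 := ne_of_gt (by linarith)
    rw [mul_div_assoc, div_self hne0, mul_one]
    ring
  · -- no-jump case
    rw [hκc, htinv i]
end
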